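/- arXiv:nlin/0003020 — 2 statements merged into one kernel-verified Lean document; each statement's English description precedes it below -/
import Mathlib

section
/- The functions H_0, H_1, H_2 pairwise Poisson-commute with respect to both Poisson brackets of the KdV_5 system: {H_i, H_j}_0 = (dH_i)^T P_0 (dH_j) = 0 and {H_i, H_j}_1 = (dH_i)^T P_1 (dH_j) = 0 for all i, j in {0,1,2}. -/
/-!
Both Poisson tensors are antisymmetric, so each bracket is antisymmetric in its two arguments
and vanishes on the diagonal. What remains are the brackets `{H_a, H_b}` with `a < b`; once the
gradients `dH_i` are computed, each of these is a polynomial identity in `u`.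
-/

noncomputable section

/-- Partial derivative of `H : ℝ⁵ → ℝ` at `u` in the `i`-th coordinate direction. -/
noncomputable def pd (H : (Fin 5 → ℝ) → ℝ) (u : Fin 5 → ℝ) (i : Fin 5) : ℝ :=
  fderiv ℝ H u (Pi.single i 1)

/-- The Hamiltonian `H₀` of the stationary KdV₅ system. -/
def H0 (u : Fin 5 → ℝ) : ℝ :=
  (1/16) * (-2*u 2*u 4 + 6*(u 0)^2*u 4 + (u 3)^2 - 12*u 0*u 1*u 3
    + 16*u 0*(u 2)^2 + 12*(u 1)^2*u 2 - 60*(u 0)^3*u 2 + 36*(u 0)^5)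

/-- The Hamiltonian `H₁` of the stationary KdV₅ system. -/
def H1 (u : Fin 5 → ℝ) : ℝ :=
  -(1/4) * (2*u 0*u 4 - 2*u 1*u 3 + (u 2)^2 - 20*(u 0)^2*u 2 + 15*(u 0)^4)

/-- The Hamiltonian `H₂` of the stationary KdV₅ system. -/
def H2 (u : Fin 5 → ℝ) : ℝ :=
  u 4 - 10*u 0*u 2 - 5*(u 1)^2 + 10*(u 0)^3

/-- The first vector field `X₁` of the stationary KdV₅ system. -/
def X1 (u : Fin 5 → ℝ) : Fin 5 → ℝ :=
  ![u 1, u 2, u 3, u 4, 10*u 0*u 3 + 20*u 1*u 2 - 30*(u 0)^2*u 1]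

/-- The third vector field `X₃` of the stationary KdV₅ system. -/
def X3 (u : Fin 5 → ℝ) : Fin 5 → ℝ :=
  ![(1/4)*(u 3 - 6*u 0*u 1),
    (1/4)*(u 4 - 6*u 0*u 2 - 6*(u 1)^2),
    (1/4)*(4*u 0*u 3 + 2*u 1*u 2 - 30*(u 0)^2*u 1),
    (1/4)*(4*u 0*u 4 + 6*u 1*u 3 + 2*(u 2)^2 - 30*(u 0)^2*u 2 - 60*u 0*(u 1)^2),
    (1/4)*(10*u 1*u 4 + 10*(u 0)^2*u 3 + 10*u 2*u 3 - 100*u 0*u 1*u 2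
      - 60*(u 1)^3 - 120*(u 0)^3*u 1)]

/-- The first Poisson tensor `P₀` of the stationary KdV₅ system. -/
def P0 (u : Fin 5 → ℝ) : Matrix (Fin 5) (Fin 5) ℝ :=
  !![0, 0, 0, 2, 0;
     0, 0, -2, 0, -20*u 0;
     0, 2, 0, 20*u 0, 20*u 1;
     -2, 0, -20*u 0, 0, -140*(u 0)^2 - 20*u 2;
     0, 20*u 0, -20*u 1, 140*(u 0)^2 + 20*u 2, 0]

/-- The second Poisson tensor `P₁` of the stationary KdV₅ system. -/
def P1 (u : Fin 5 → ℝ) : Matrix (Fin 5) (Fin 5) ℝ :=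
  !![0, 1/2, 0, 3*u 0, 6*u 1;
     -(1/2), 0, -3*u 0, -3*u 1, -4*u 2 - 15*(u 0)^2;
     0, 3*u 0, 0, u 2 + 15*(u 0)^2, u 3 + 30*u 0*u 1;
     -3*u 0, 3*u 1, -(u 2 + 15*(u 0)^2), 0, u 4 - 40*u 0*u 2 + 30*(u 1)^2 - 60*(u 0)^3;
     -6*u 1, 4*u 2 + 15*(u 0)^2, -(u 3 + 30*u 0*u 1),
       -(u 4 - 40*u 0*u 2 + 30*(u 1)^2 - 60*(u 0)^3), 0]

/-- One term of the cyclic Jacobi expression: `∑ₗ P_{il} ∂Q_{jk}/∂u_l`. -/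
noncomputable def jacTerm (P Q : (Fin 5 → ℝ) → Matrix (Fin 5) (Fin 5) ℝ)
    (u : Fin 5 → ℝ) (i j k : Fin 5) : ℝ :=
  ∑ l, P u i l * pd (fun v => Q v j k) u l

open scoped Matrix

section Bracket

variable {ι R : Type*} [Fintype ι] [CommRing R]

/-- `bracket (P u) (pd F u) (pd G u)` is the Poisson bracket `{F, G}` of `P` at `u`. -/
def bracket (P : Matrix ι ι R) (x y : ι → R) : R :=
  ∑ i, ∑ j, x i * P i j * y j

lemma bracket_swap {P : Matrix ι ι R} (hP : Pᵀ = -P) (x y : ι → R) :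
    bracket P y x = -bracket P x y := by
  have hP' (i j : ι) : P j i = -P i j := by simpa using congrFun (congrFun hP i) j
  rw [bracket, bracket, Finset.sum_comm, ← Finset.sum_neg_distrib]
  refine Finset.sum_congr rfl fun i _ => ?_
  rw [← Finset.sum_neg_distrib]
  refine Finset.sum_congr rfl fun j _ => ?_
  rw [hP']
  ring

lemma bracket_self [NoZeroDivisors R] [CharZero R] {P : Matrix ι ι R} (hP : Pᵀ = -P)
    (x : ι → R) : bracket P x x = 0 :=
  self_eq_neg.mp (bracket_swap hP x x)

lemma bracket_eq_zero_of_lt {κ : Type*} [LinearOrder κ] [NoZeroDivisors R] [CharZero R]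
    {P : Matrix ι ι R} (hP : Pᵀ = -P) (x : κ → ι → R)
    (h : ∀ a b, a < b → bracket P (x a) (x b) = 0) (a b : κ) :
    bracket P (x a) (x b) = 0 := by
  rcases lt_trichotomy a b with hab | rfl | hba
  · exact h a b hab
  · exact bracket_self hP (x a)
  · rw [bracket_swap hP, h b a hba, neg_zero]

end Bracket

section PartialDerivatives

variable {f g : (Fin 5 → ℝ) → ℝ} {u : Fin 5 → ℝ}

lemma pd_coord (j i : Fin 5) : pd (fun v => v j) u i = if j = i then 1 else 0 := by
  rw [pd, show (fun v : Fin 5 → ℝ => v j) = ContinuousLinearMap.proj (R := ℝ) j from rfl,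
    ContinuousLinearMap.fderiv]
  simp [Pi.single_apply]

lemma pd_const (c : ℝ) (i : Fin 5) : pd (fun _ => c) u i = 0 := by
  simp [pd]

lemma pd_add (hf : DifferentiableAt ℝ f u) (hg : DifferentiableAt ℝ g u) (i : Fin 5) :
    pd (fun v => f v + g v) u i = pd f u i + pd g u i := by
  simp [pd, fderiv_fun_add hf hg]

lemma pd_sub (hf : DifferentiableAt ℝ f u) (hg : DifferentiableAt ℝ g u) (i : Fin 5) :
    pd (fun v => f v - g v) u i = pd f u i - pd g u i := by
  simp [pd, fderiv_fun_sub hf hg]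

lemma pd_neg (i : Fin 5) : pd (fun v => -f v) u i = -pd f u i := by
  simp [pd]

lemma pd_mul (hf : DifferentiableAt ℝ f u) (hg : DifferentiableAt ℝ g u) (i : Fin 5) :
    pd (fun v => f v * g v) u i = pd f u i * g u + f u * pd g u i := by
  simp [pd, fderiv_fun_mul hf hg]
  ring

lemma pd_pow (hf : DifferentiableAt ℝ f u) (n : ℕ) (i : Fin 5) :
    pd (fun v => f v ^ n) u i = n * f u ^ (n - 1) * pd f u i := by
  simp [pd, fderiv_fun_pow n hf]

end PartialDerivatives

section Gradients

variable (u : Fin 5 → ℝ)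

lemma pd_H0 : pd H0 u = (1/16 : ℝ) • ![
    12*u 0*u 4 - 12*u 1*u 3 + 16*(u 2)^2 - 180*(u 0)^2*u 2 + 180*(u 0)^4,
    -12*u 0*u 3 + 24*u 1*u 2,
    -2*u 4 + 32*u 0*u 2 + 12*(u 1)^2 - 60*(u 0)^3,
    2*u 3 - 12*u 0*u 1,
    -2*u 2 + 6*(u 0)^2] := by
  ext i
  unfold H0
  simp (disch := fun_prop) only [pd_add, pd_sub, pd_neg, pd_mul, pd_pow, pd_const, pd_coord]
  fin_cases i <;>
  · simp only [Fin.zero_eta, Fin.mk_one, Fin.reduceFinMk, Fin.isValue, Fin.reduceEq, ↓reduceIte,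
      Pi.smul_apply, smul_eq_mul, Matrix.cons_val]
    ring

lemma pd_H1 : pd H1 u = (-1/4 : ℝ) • ![
    2*u 4 - 40*u 0*u 2 + 60*(u 0)^3,
    -2*u 3,
    2*u 2 - 20*(u 0)^2,
    -2*u 1,
    2*u 0] := by
  ext i
  unfold H1
  simp (disch := fun_prop) only [pd_add, pd_sub, pd_neg, pd_mul, pd_pow, pd_const, pd_coord]
  fin_cases i <;>
  · simp only [Fin.zero_eta, Fin.mk_one, Fin.reduceFinMk, Fin.isValue, Fin.reduceEq, ↓reduceIte,
      Pi.smul_apply, smul_eq_mul, Matrix.cons_val]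
    ring

lemma pd_H2 : pd H2 u = ![-10*u 2 + 30*(u 0)^2, -10*u 1, -10*u 0, 0, 1] := by
  ext i
  unfold H2
  simp (disch := fun_prop) only [pd_add, pd_sub, pd_mul, pd_pow, pd_const, pd_coord]
  fin_cases i <;>
  · simp only [Fin.zero_eta, Fin.mk_one, Fin.reduceFinMk, Fin.isValue, Fin.reduceEq, ↓reduceIte,
      Matrix.cons_val]
    ring

end Gradients


lemma P0_transpose (u : Fin 5 → ℝ) : (P0 u)ᵀ = -P0 u := by
  ext i j
  fin_cases i <;> fin_cases j <;> simp [P0] <;> ring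

lemma P1_transpose (u : Fin 5 → ℝ) : (P1 u)ᵀ = -P1 u := by
  ext i j
  fin_cases i <;> fin_cases j <;> simp [P1] <;> ring

lemma bracket_P0_pd_H_of_lt (u : Fin 5 → ℝ) (a b : Fin 3) (hab : a < b) :
    bracket (P0 u) (pd (![H0, H1, H2] a) u) (pd (![H0, H1, H2] b) u) = 0 := by
  fin_cases a <;> fin_cases b <;>
    simp only [Fin.zero_eta, Fin.mk_one, Fin.reduceFinMk, Fin.isValue, Fin.reduceLT,
      lt_self_iff_false] at hab ⊢ <;>
  · simp only [bracket, Fin.sum_univ_five, P0, pd_H0, pd_H1, pd_H2, Matrix.of_apply,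
      Matrix.cons_val', Matrix.cons_val_fin_one, Matrix.cons_val_zero, Matrix.cons_val_one,
      Matrix.cons_val, Pi.smul_apply, smul_eq_mul]
    ring

lemma bracket_P1_pd_H_of_lt (u : Fin 5 → ℝ) (a b : Fin 3) (hab : a < b) :
    bracket (P1 u) (pd (![H0, H1, H2] a) u) (pd (![H0, H1, H2] b) u) = 0 := by
  fin_cases a <;> fin_cases b <;>
    simp only [Fin.zero_eta, Fin.mk_one, Fin.reduceFinMk, Fin.isValue, Fin.reduceLT,
      lt_self_iff_false] at hab ⊢ <;>
  · simp only [bracket, Fin.sum_univ_five, P1, pd_H0, pd_H1, pd_H2, Matrix.of_apply,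
      Matrix.cons_val', Matrix.cons_val_fin_one, Matrix.cons_val_zero, Matrix.cons_val_one,
      Matrix.cons_val, Pi.smul_apply, smul_eq_mul]
    ring

/-- `H₀, H₁, H₂` pairwise Poisson-commute with respect to both `P₀` and `P₁`. -/
theorem stmt11 :
    ∀ a b : Fin 3, ∀ u : Fin 5 → ℝ,
      (∑ i, ∑ j, pd (![H0, H1, H2] a) u i * P0 u i j * pd (![H0, H1, H2] b) u j = 0) ∧
      (∑ i, ∑ j, pd (![H0, H1, H2] a) u i * P1 u i j * pd (![H0, H1, H2] b) u j = 0) := by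
  intro a b u
  exact ⟨bracket_eq_zero_of_lt (P0_transpose u) _ (bracket_P0_pd_H_of_lt u) a b,
    bracket_eq_zero_of_lt (P1_transpose u) _ (bracket_P1_pd_H_of_lt u) a b⟩

end
end

section
/- The determinant of the Lax matrix L(λ) of KdV_5 satisfies: -det L(λ) = λ^5 + (1/16)(H_2λ^2 + H_1λ + H_0), where H_0, H_1, H_2 are the integrals of motion of the KdV_5 system. In particular the coefficients of -det L(λ) as a polynomial in λ are integrals of motion for X_1 and X_3. -/
/-! Expanding the `2 × 2` determinant gives the first identity. Each of `H₀, H₁, H₂` is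
conserved along `X₁` and `X₃`: pairing its (explicitly computed) differential with the
vector field gives a polynomial that cancels identically. Since `-det L(λ)` is a linear
combination of `H₀, H₁, H₂` with coefficients depending on `λ` only, it is conserved too. -/

noncomputable section

/-- The Lax matrix `L(λ)` of the stationary KdV₅ system. -/
def Lmat (u : Fin 5 → ℝ) (lam : ℝ) : Matrix (Fin 2) (Fin 2) ℝ :=
  (1/16 : ℝ) •
    !![4*u 1*lam + u 3 - 6*u 0*u 1,
       16*lam^2 - 8*u 0*lam + 6*(u 0)^2 - 2*u 2;
       16*lam^3 + 8*u 0*lam^2 + 2*lam*(u 2 - (u 0)^2) + u 4 - 8*u 0*u 2 - 6*(u 1)^2 + 6*(u 0)^3,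
       -(4*u 1*lam + u 3 - 6*u 0*u 1)]

theorem neg_det_Lmat (u : Fin 5 → ℝ) (lam : ℝ) :
    -(Lmat u lam).det = lam^5 + (1/16) * (H2 u * lam^2 + H1 u * lam + H0 u) := by
  simp only [Lmat, Matrix.det_fin_two, Matrix.smul_apply, Matrix.of_apply, Matrix.cons_val',
    Matrix.cons_val_zero, Matrix.cons_val_one, Matrix.empty_val', Matrix.cons_val_fin_one,
    smul_eq_mul, H0, H1, H2]
  ring

section FirstIntegral

variable {E : Type*} [NormedAddCommGroup E] [NormedSpace ℝ E] {X : E → E} {f g : E → ℝ}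

def IsFirstIntegral (X : E → E) (H : E → ℝ) : Prop :=
  ∀ u, fderiv ℝ H u (X u) = 0

theorem IsFirstIntegral.add (hf : Differentiable ℝ f) (hg : Differentiable ℝ g)
    (hfX : IsFirstIntegral X f) (hgX : IsFirstIntegral X g) :
    IsFirstIntegral X (fun u => f u + g u) := fun u => by
  rw [fderiv_fun_add (hf u) (hg u), add_apply, hfX u, hgX u, add_zero]

theorem IsFirstIntegral.const_add (c : ℝ) (hfX : IsFirstIntegral X f) :
    IsFirstIntegral X (fun u => c + f u) := fun u => by
  rw [fderiv_const_add, hfX u]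

theorem IsFirstIntegral.const_mul (hf : Differentiable ℝ f) (c : ℝ) (hfX : IsFirstIntegral X f) :
    IsFirstIntegral X (fun u => c * f u) := fun u => by
  rw [fderiv_const_mul (hf u), smul_apply, hfX u, smul_zero]

theorem IsFirstIntegral.mul_const (hf : Differentiable ℝ f) (c : ℝ) (hfX : IsFirstIntegral X f) :
    IsFirstIntegral X (fun u => f u * c) := by
  simpa only [mul_comm _ c] using hfX.const_mul hf c

end FirstIntegral

theorem fderiv_apply_apply {ι : Type*} [Fintype ι] (i : ι) (u w : ι → ℝ) :
    fderiv ℝ (fun v : ι → ℝ => v i) u w = w i := by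
  rw [(hasFDerivAt_apply i u).fderiv]
  rfl

theorem sum_mul_pd_eq_fderiv (H : (Fin 5 → ℝ) → ℝ) (u w : Fin 5 → ℝ) :
    ∑ k, w k * pd H u k = fderiv ℝ H u w := by
  conv_rhs => rw [← Finset.univ_sum_single w, map_sum]
  refine Finset.sum_congr rfl fun k _ => ?_
  rw [pd, ← smul_eq_mul, ← map_smul, ← Pi.single_smul', smul_eq_mul, mul_one]

theorem fderiv_H0_apply (u w : Fin 5 → ℝ) :
    fderiv ℝ H0 u w = (1/16) *
      ((12*u 0*u 4 - 12*u 1*u 3 + 16*(u 2)^2 - 180*(u 0)^2*u 2 + 180*(u 0)^4) * w 0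
        + (-12*u 0*u 3 + 24*u 1*u 2) * w 1
        + (-2*u 4 + 32*u 0*u 2 + 12*(u 1)^2 - 60*(u 0)^3) * w 2
        + (2*u 3 - 12*u 0*u 1) * w 3
        + (-2*u 2 + 6*(u 0)^2) * w 4) := by
  unfold H0
  simp (disch := fun_prop) only [fderiv_fun_add, fderiv_fun_sub, fderiv_fun_mul, fderiv_fun_pow,
    fderiv_const_apply, add_apply, sub_apply, smul_apply, zero_apply, fderiv_apply_apply,
    smul_eq_mul]
  ring

theorem fderiv_H1_apply (u w : Fin 5 → ℝ) :
    fderiv ℝ H1 u w = -(1/4) *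
      ((2*u 4 - 40*u 0*u 2 + 60*(u 0)^3) * w 0 - 2*u 3 * w 1 + (2*u 2 - 20*(u 0)^2) * w 2
        - 2*u 1 * w 3 + 2*u 0 * w 4) := by
  unfold H1
  simp (disch := fun_prop) only [fderiv_fun_add, fderiv_fun_sub, fderiv_fun_mul, fderiv_fun_pow,
    fderiv_const_apply, add_apply, sub_apply, smul_apply, zero_apply, fderiv_apply_apply,
    smul_eq_mul]
  ring

theorem fderiv_H2_apply (u w : Fin 5 → ℝ) :
    fderiv ℝ H2 u w = (-10*u 2 + 30*(u 0)^2) * w 0 - 10*u 1 * w 1 - 10*u 0 * w 2 + w 4 := by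
  unfold H2
  simp (disch := fun_prop) only [fderiv_fun_add, fderiv_fun_sub, fderiv_fun_mul, fderiv_fun_pow,
    fderiv_const_apply, add_apply, sub_apply, smul_apply, zero_apply, fderiv_apply_apply,
    smul_eq_mul]
  ring

theorem isFirstIntegral_X1 :
    IsFirstIntegral X1 H0 ∧ IsFirstIntegral X1 H1 ∧ IsFirstIntegral X1 H2 := by
  refine ⟨fun u => ?_, fun u => ?_, fun u => ?_⟩ <;>
  · simp only [fderiv_H0_apply, fderiv_H1_apply, fderiv_H2_apply, X1, Matrix.cons_val_zero,
      Matrix.cons_val_one, Matrix.cons_val_two, Matrix.cons_val_three, Matrix.cons_val_four,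
      Matrix.head_cons, Matrix.tail_cons]
    ring

theorem isFirstIntegral_X3 :
    IsFirstIntegral X3 H0 ∧ IsFirstIntegral X3 H1 ∧ IsFirstIntegral X3 H2 := by
  refine ⟨fun u => ?_, fun u => ?_, fun u => ?_⟩ <;>
  · simp only [fderiv_H0_apply, fderiv_H1_apply, fderiv_H2_apply, X3, Matrix.cons_val_zero,
      Matrix.cons_val_one, Matrix.cons_val_two, Matrix.cons_val_three, Matrix.cons_val_four,
      Matrix.head_cons, Matrix.tail_cons]
    ring

theorem isFirstIntegral_neg_det_Lmat {X : (Fin 5 → ℝ) → Fin 5 → ℝ} (h0 : IsFirstIntegral X H0)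
    (h1 : IsFirstIntegral X H1) (h2 : IsFirstIntegral X H2) (lam : ℝ) :
    IsFirstIntegral X (fun v => -(Lmat v lam).det) := by
  have hd0 : Differentiable ℝ H0 := by unfold H0; fun_prop
  have hd1 : Differentiable ℝ H1 := by unfold H1; fun_prop
  have hd2 : Differentiable ℝ H2 := by unfold H2; fun_prop
  simp only [neg_det_Lmat]
  exact .const_add _ (.const_mul (by fun_prop) _ (.add (by fun_prop) hd0 (.add (by fun_prop)
    (by fun_prop) (h2.mul_const hd2 _) (h1.mul_const hd1 _)) h0))

/-- `-det L(λ) = λ⁵ + (1/16)(H₂λ² + H₁λ + H₀)`; in particular the coefficients of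
`-det L(λ)` are integrals of motion for `X₁` and `X₃`. -/
theorem stmt13 :
    (∀ u : Fin 5 → ℝ, ∀ lam : ℝ,
      -(Lmat u lam).det = lam^5 + (1/16) * (H2 u * lam^2 + H1 u * lam + H0 u)) ∧
    (∀ u : Fin 5 → ℝ, ∀ lam : ℝ,
      ∑ k, X1 u k * pd (fun v => -(Lmat v lam).det) u k = 0) ∧
    (∀ u : Fin 5 → ℝ, ∀ lam : ℝ,
      ∑ k, X3 u k * pd (fun v => -(Lmat v lam).det) u k = 0) := by
  obtain ⟨h10, h11, h12⟩ := isFirstIntegral_X1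
  obtain ⟨h30, h31, h32⟩ := isFirstIntegral_X3
  refine ⟨neg_det_Lmat, fun u lam => ?_, fun u lam => ?_⟩
  · rw [sum_mul_pd_eq_fderiv]
    exact isFirstIntegral_neg_det_Lmat h10 h11 h12 lam u
  · rw [sum_mul_pd_eq_fderiv]
    exact isFirstIntegral_neg_det_Lmat h30 h31 h32 lam u

end
end
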